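/- arXiv:0709.2556 — 2 statements merged into one kernel-verified Lean document; each statement's English description precedes it below -/
import Mathlib

section
/- The dual function f(y) = ½‖p_K(c + Aᵀy)‖² − bᵀy is convex and differentiable on ℝᵐ, with gradient ∇f(y) = A p_K(c + Aᵀy) − b. -/
open RealInnerProductSpace

section Aux

variable {E : Type*} [NormedAddCommGroup E] [InnerProductSpace ℝ E]
variable {K : Set E} {pK : E → E}

/-- Variational inequality for the metric projection. -/
lemma proj_var_ineq (hKcvx : Convex ℝ K)
    (hpK : ∀ z, pK z ∈ K ∧ ∀ x ∈ K, ‖pK z - z‖ ≤ ‖x - z‖)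
    (z : E) {x : E} (hx : x ∈ K) : ⟪z - pK z, x - pK z⟫ ≤ 0 := by
  set p := pK z with hp
  have key : ∀ t : ℝ, 0 < t → t ≤ 1 → 2 * ⟪z - p, x - p⟫ ≤ t * ‖x - p‖ ^ 2 := by
    intro t ht ht1
    have hmem : p + t • (x - p) ∈ K := by
      have h := hKcvx (hpK z).1 hx (by linarith : (0:ℝ) ≤ 1 - t) ht.le (by ring)
      convert h using 1
      module
    have h1 := (hpK z).2 _ hmem
    have h2 : ‖p - z‖ ^ 2 ≤ ‖p + t • (x - p) - z‖ ^ 2 :=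
      pow_le_pow_left₀ (norm_nonneg _) h1 2
    have hx2 : p + t • (x - p) - z = (p - z) + t • (x - p) := by abel
    rw [hx2, norm_add_sq_real, real_inner_smul_right, norm_smul, Real.norm_eq_abs,
      abs_of_pos ht] at h2
    have hiz : ⟪z - p, x - p⟫ = -⟪p - z, x - p⟫ := by
      rw [show z - p = -(p - z) by abel, inner_neg_left]
    rw [hiz]
    have hC : (0:ℝ) ≤ ‖x - p‖ ^ 2 := sq_nonneg _
    nlinarith [sq_nonneg (t * ‖x - p‖)]
  by_contra hcon
  push_neg at hcon
  have hC : (0:ℝ) ≤ ‖x - p‖ ^ 2 := sq_nonneg _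
  rcases eq_or_lt_of_le hC with hC0 | hC0
  · have h := key 1 one_pos le_rfl
    rw [← hC0] at h
    linarith
  · have ht : 0 < min 1 (⟪z - p, x - p⟫ / ‖x - p‖ ^ 2) :=
      lt_min one_pos (div_pos hcon hC0)
    have h := key _ ht (min_le_left _ _)
    have h2 : min 1 (⟪z - p, x - p⟫ / ‖x - p‖ ^ 2) * ‖x - p‖ ^ 2 ≤ ⟪z - p, x - p⟫ := by
      calc min 1 (⟪z - p, x - p⟫ / ‖x - p‖ ^ 2) * ‖x - p‖ ^ 2
          ≤ (⟪z - p, x - p⟫ / ‖x - p‖ ^ 2) * ‖x - p‖ ^ 2 :=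
            mul_le_mul_of_nonneg_right (min_le_right _ _) hC
        _ = ⟪z - p, x - p⟫ := div_mul_cancel₀ _ (ne_of_gt hC0)
    linarith

lemma proj_orth (hKcvx : Convex ℝ K)
    (hKcone : ∀ x ∈ K, ∀ t : ℝ, 0 ≤ t → t • x ∈ K)
    (hpK : ∀ z, pK z ∈ K ∧ ∀ x ∈ K, ‖pK z - z‖ ≤ ‖x - z‖)
    (z : E) : ⟪z - pK z, pK z⟫ = 0 := by
  set p := pK z with hp
  have hpmem := (hpK z).1
  have h1 := proj_var_ineq hKcvx hpK z (hKcone _ hpmem 2 (by norm_num))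
  rw [show (2:ℝ) • p - p = p by module] at h1
  have h2 := proj_var_ineq hKcvx hpK z (hKcone _ hpmem (1/2) (by norm_num))
  rw [show (1/2 : ℝ) • p - p = (-(1/2) : ℝ) • p by module, real_inner_smul_right] at h2
  linarith

lemma proj_inner_nonpos (hKcvx : Convex ℝ K)
    (hKcone : ∀ x ∈ K, ∀ t : ℝ, 0 ≤ t → t • x ∈ K)
    (hpK : ∀ z, pK z ∈ K ∧ ∀ x ∈ K, ‖pK z - z‖ ≤ ‖x - z‖)
    (z : E) {x : E} (hx : x ∈ K) : ⟪z - pK z, x⟫ ≤ 0 := by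
  have h1 := proj_var_ineq hKcvx hpK z hx
  have h2 := proj_orth hKcvx hKcone hpK z
  rw [inner_sub_right] at h1
  linarith

/-- support-type inequality: the function z ↦ ½‖pK z‖² dominates the affine functions. -/
lemma proj_support (hKcvx : Convex ℝ K)
    (hKcone : ∀ x ∈ K, ∀ t : ℝ, 0 ≤ t → t • x ∈ K)
    (hpK : ∀ z, pK z ∈ K ∧ ∀ x ∈ K, ‖pK z - z‖ ≤ ‖x - z‖)
    (z : E) {x : E} (hx : x ∈ K) :
    ⟪x, z⟫ - (1/2) * ‖x‖ ^ 2 ≤ (1/2) * ‖pK z‖ ^ 2 := by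
  have h1 := proj_inner_nonpos hKcvx hKcone hpK z hx
  rw [inner_sub_left] at h1
  have h2 : ⟪pK z, x⟫ ≤ ‖pK z‖ * ‖x‖ := real_inner_le_norm _ _
  have h3 : ⟪x, z⟫ = ⟪z, x⟫ := real_inner_comm _ _
  nlinarith [sq_nonneg (‖pK z‖ - ‖x‖)]

lemma proj_self_inner (hKcvx : Convex ℝ K)
    (hKcone : ∀ x ∈ K, ∀ t : ℝ, 0 ≤ t → t • x ∈ K)
    (hpK : ∀ z, pK z ∈ K ∧ ∀ x ∈ K, ‖pK z - z‖ ≤ ‖x - z‖)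
    (z : E) : ⟪pK z, z⟫ = ‖pK z‖ ^ 2 := by
  have h := proj_orth hKcvx hKcone hpK z
  rw [inner_sub_left] at h
  have h2 : ⟪pK z, pK z⟫ = ‖pK z‖ ^ 2 := real_inner_self_eq_norm_sq _
  have h3 : ⟪pK z, z⟫ = ⟪z, pK z⟫ := real_inner_comm _ _
  linarith

/-- almost-monotonicity giving the quadratic bound. -/
lemma proj_mono (hKcvx : Convex ℝ K)
    (hpK : ∀ z, pK z ∈ K ∧ ∀ x ∈ K, ‖pK z - z‖ ≤ ‖x - z‖)
    (z z' : E) : ⟪pK z' - pK z, z' - z⟫ ≤ ‖z' - z‖ ^ 2 := by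
  have h1 := proj_var_ineq hKcvx hpK z (hpK z').1
  have h2 := proj_var_ineq hKcvx hpK z' (hpK z).1
  set p := pK z
  set p' := pK z'
  have e1 : ⟪z - p, p' - p⟫ = ⟪z, p'⟫ - ⟪z, p⟫ - ⟪p, p'⟫ + ⟪p, p⟫ := by
    rw [inner_sub_left, inner_sub_right, inner_sub_right]; ring
  have e2 : ⟪z' - p', p - p'⟫ = ⟪z', p⟫ - ⟪z', p'⟫ - ⟪p', p⟫ + ⟪p', p'⟫ := by
    rw [inner_sub_left, inner_sub_right, inner_sub_right]; ring
  have e3 : ⟪p' - p, z' - z⟫ = ⟪p', z'⟫ - ⟪p', z⟫ - ⟪p, z'⟫ + ⟪p, z⟫ := by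
    rw [inner_sub_left, inner_sub_right, inner_sub_right]; ring
  have hsq : ‖p' - p‖ ^ 2 = ⟪p', p'⟫ - 2 * ⟪p', p⟫ + ⟪p, p⟫ := by
    rw [← real_inner_self_eq_norm_sq, inner_sub_left, inner_sub_right, inner_sub_right,
      real_inner_comm p p']
    ring
  have hcs : ⟪p' - p, z' - z⟫ ≤ ‖p' - p‖ * ‖z' - z‖ := real_inner_le_norm _ _
  -- key : ‖p' - p‖ ^ 2 ≤ ⟪p' - p, z' - z⟫
  have hkey : ‖p' - p‖ ^ 2 ≤ ⟪p' - p, z' - z⟫ := by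
    rw [e1] at h1; rw [e2] at h2; rw [e3, hsq]
    have c1 : ⟪z, p'⟫ = ⟪p', z⟫ := real_inner_comm _ _
    have c2 : ⟪z, p⟫ = ⟪p, z⟫ := real_inner_comm _ _
    have c3 : ⟪z', p⟫ = ⟪p, z'⟫ := real_inner_comm _ _
    have c4 : ⟪z', p'⟫ = ⟪p', z'⟫ := real_inner_comm _ _
    have c5 : ⟪p, p'⟫ = ⟪p', p⟫ := real_inner_comm _ _
    linarith
  nlinarith [sq_nonneg (‖p' - p‖ - ‖z' - z‖), norm_nonneg (p' - p), norm_nonneg (z' - z)]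

/-- the sandwich estimate for the squared-norm-of-projection function. -/
lemma proj_sandwich (hKcvx : Convex ℝ K)
    (hKcone : ∀ x ∈ K, ∀ t : ℝ, 0 ≤ t → t • x ∈ K)
    (hpK : ∀ z, pK z ∈ K ∧ ∀ x ∈ K, ‖pK z - z‖ ≤ ‖x - z‖)
    (z z' : E) :
    0 ≤ (1/2) * ‖pK z'‖ ^ 2 - (1/2) * ‖pK z‖ ^ 2 - ⟪pK z, z' - z⟫ ∧
      (1/2) * ‖pK z'‖ ^ 2 - (1/2) * ‖pK z‖ ^ 2 - ⟪pK z, z' - z⟫ ≤ ‖z' - z‖ ^ 2 := by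
  set p := pK z
  set p' := pK z'
  have hself : ⟪p, z⟫ = ‖p‖ ^ 2 := proj_self_inner hKcvx hKcone hpK z
  have hself' : ⟪p', z'⟫ = ‖p'‖ ^ 2 := proj_self_inner hKcvx hKcone hpK z'
  have hl : ⟪p, z'⟫ - (1/2) * ‖p‖ ^ 2 ≤ (1/2) * ‖p'‖ ^ 2 :=
    proj_support hKcvx hKcone hpK z' (hpK z).1
  have hu : ⟪p', z⟫ - (1/2) * ‖p'‖ ^ 2 ≤ (1/2) * ‖p‖ ^ 2 :=
    proj_support hKcvx hKcone hpK z (hpK z').1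
  have hmono : ⟪p' - p, z' - z⟫ ≤ ‖z' - z‖ ^ 2 := proj_mono hKcvx hpK z z'
  have ed : ⟪p, z' - z⟫ = ⟪p, z'⟫ - ⟪p, z⟫ := inner_sub_right _ _ _
  have ed2 : ⟪p' - p, z' - z⟫ = ⟪p', z'⟫ - ⟪p', z⟫ - ⟪p, z'⟫ + ⟪p, z⟫ := by
    rw [inner_sub_left, inner_sub_right, inner_sub_right]; ring
  constructor <;> [skip; skip] <;> linarith

end Aux

theorem dual_function_convex_differentiable (n m : ℕ)
    (K : Set (EuclideanSpace ℝ (Fin n)))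
    (hKne : K.Nonempty) (hKcl : IsClosed K) (hKcvx : Convex ℝ K)
    (hKcone : ∀ x ∈ K, ∀ t : ℝ, 0 ≤ t → t • x ∈ K)
    (pK : EuclideanSpace ℝ (Fin n) → EuclideanSpace ℝ (Fin n))
    (hpK : ∀ z, pK z ∈ K ∧ ∀ x ∈ K, ‖pK z - z‖ ≤ ‖x - z‖)
    (A : EuclideanSpace ℝ (Fin n) →ₗ[ℝ] EuclideanSpace ℝ (Fin m))
    (b : EuclideanSpace ℝ (Fin m)) (c : EuclideanSpace ℝ (Fin n)) :
    ConvexOn ℝ Set.univ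
        (fun y => (1/2) * ‖pK (c + LinearMap.adjoint A y)‖^2 - ⟪b, y⟫) ∧
      ∀ y, HasGradientAt
        (fun y => (1/2) * ‖pK (c + LinearMap.adjoint A y)‖^2 - ⟪b, y⟫)
        (A (pK (c + LinearMap.adjoint A y)) - b) y := by
  constructor
  · refine ⟨convex_univ, ?_⟩
    intro y1 _ y2 _ t s ht hs hts
    simp only
    have hz : c + LinearMap.adjoint A (t • y1 + s • y2)
        = t • (c + LinearMap.adjoint A y1) + s • (c + LinearMap.adjoint A y2) := by
      calc c + LinearMap.adjoint A (t • y1 + s • y2)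
          = (t + s) • c + (t • LinearMap.adjoint A y1 + s • LinearMap.adjoint A y2) := by
            rw [hts, map_add, map_smul, map_smul, one_smul]
        _ = t • (c + LinearMap.adjoint A y1) + s • (c + LinearMap.adjoint A y2) := by
            module
    set z1 := c + LinearMap.adjoint A y1
    set z2 := c + LinearMap.adjoint A y2
    rw [hz]
    set p := pK (t • z1 + s • z2) with hpdef
    have hself : ⟪p, t • z1 + s • z2⟫ = ‖p‖ ^ 2 :=
      proj_self_inner hKcvx hKcone hpK _
    rw [inner_add_right, real_inner_smul_right, real_inner_smul_right] at hself
    have l1 : ⟪p, z1⟫ - (1/2) * ‖p‖ ^ 2 ≤ (1/2) * ‖pK z1‖ ^ 2 :=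
      proj_support hKcvx hKcone hpK z1 (hpK _).1
    have l2 : ⟪p, z2⟫ - (1/2) * ‖p‖ ^ 2 ≤ (1/2) * ‖pK z2‖ ^ 2 :=
      proj_support hKcvx hKcone hpK z2 (hpK _).1
    have hb : ⟪b, t • y1 + s • y2⟫ = t * ⟪b, y1⟫ + s * ⟪b, y2⟫ := by
      rw [inner_add_right, real_inner_smul_right, real_inner_smul_right]
    rw [hb]
    simp only [smul_eq_mul]
    have hX : t * ‖p‖ ^ 2 + s * ‖p‖ ^ 2 = ‖p‖ ^ 2 := by
      rw [← add_mul, hts, one_mul]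
    nlinarith [mul_le_mul_of_nonneg_left l1 ht, mul_le_mul_of_nonneg_left l2 hs]
  · intro y
    rw [hasGradientAt_iff_isLittleO, Asymptotics.isLittleO_iff]
    intro ε hε
    set A' := LinearMap.toContinuousLinearMap (LinearMap.adjoint A) with hA'
    set C := ‖A'‖ with hC
    have hCnn : 0 ≤ C := norm_nonneg _
    have hδ : (0:ℝ) < ε / (C ^ 2 + 1) := by positivity
    filter_upwards [Metric.ball_mem_nhds y hδ] with y' hy'
    rw [Metric.mem_ball, dist_eq_norm] at hy'
    set z := c + LinearMap.adjoint A y with hzdef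
    set z' := c + LinearMap.adjoint A y' with hz'def
    have hzz : z' - z = LinearMap.adjoint A (y' - y) := by
      rw [hzdef, hz'def, map_sub]; abel
    have hnorm : ‖z' - z‖ ≤ C * ‖y' - y‖ := by
      rw [hzz]
      have : LinearMap.adjoint A (y' - y) = A' (y' - y) := by
        simp [hA']
      rw [this]
      exact A'.le_opNorm _
    have hsand := proj_sandwich hKcvx hKcone hpK z z'
    have hinner : ⟪A (pK z) - b, y' - y⟫ = ⟪pK z, z' - z⟫ - ⟪b, y' - y⟫ := by
      rw [inner_sub_left, hzz, LinearMap.adjoint_inner_right]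
    have hfb : ⟪b, y' - y⟫ = ⟪b, y'⟫ - ⟪b, y⟫ := inner_sub_right _ _ _
    have hexpr : ((1:ℝ)/2) * ‖pK z'‖ ^ 2 - ⟪b, y'⟫ - ((1/2) * ‖pK z‖ ^ 2 - ⟪b, y⟫)
        - ⟪A (pK z) - b, y' - y⟫
        = (1/2) * ‖pK z'‖ ^ 2 - (1/2) * ‖pK z‖ ^ 2 - ⟪pK z, z' - z⟫ := by
      rw [hinner, hfb]; ring
    rw [Real.norm_eq_abs, hexpr, abs_of_nonneg hsand.1]
    have h1 : ‖z' - z‖ ^ 2 ≤ (C * ‖y' - y‖) ^ 2 :=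
      pow_le_pow_left₀ (norm_nonneg _) hnorm 2
    have h2 : C ^ 2 * ‖y' - y‖ ≤ ε := by
      have hle : C ^ 2 ≤ C ^ 2 + 1 := by linarith
      calc C ^ 2 * ‖y' - y‖ ≤ (C ^ 2 + 1) * ‖y' - y‖ :=
            mul_le_mul_of_nonneg_right hle (norm_nonneg _)
        _ ≤ (C ^ 2 + 1) * (ε / (C ^ 2 + 1)) :=
            mul_le_mul_of_nonneg_left hy'.le (by positivity)
        _ = ε := by field_simp
    have h4 : (C * ‖y' - y‖) ^ 2 = C ^ 2 * ‖y' - y‖ * ‖y' - y‖ := by ring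
    linarith [hsand.2, h1, h4, mul_le_mul_of_nonneg_right h2 (norm_nonneg (y' - y))]
end

section
/- If y* minimizes the dual function f(y) = ½‖p_K(c + Aᵀy)‖² − bᵀy, then x* = p_K(c + Aᵀy*) solves the primal problem: x* ∈ K, Ax* = b, and x* minimizes ½‖x − c‖² over all x ∈ K with Ax = b. -/
/-!
Because `K` is a cone, the residual `z - p_K z` is orthogonal to `p_K z` and has nonpositive inner
product with every point of `K`. Hence `‖p_K (z + v)‖² ≤ ‖p_K z + v‖²`, which is the descent bound
`f (y + v) ≤ f y + ⟪A x_y - b, v⟫ + ½ ‖Aᵀ v‖²` for the dual function, with `x_y = p_K (c + Aᵀ y)`.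
At a minimiser `y*`, testing along `v = t (b - A x*)` with `t → 0⁺` forces `A x* = b`.
Writing `x* - c = Aᵀ y* - (z - x*)` with `z = c + Aᵀ y*`, every feasible `x ∈ K` satisfies
`⟪x - x*, x* - c⟫ = -⟪z - x*, x⟫ ≥ 0`, and expanding `‖x - c‖²` around `x*` gives optimality.
-/

open RealInnerProductSpace Filter Topology

theorem nonpos_of_forall_pos_le_mul {a b : ℝ} (h : ∀ t > 0, a ≤ t * b) : a ≤ 0 := by
  have hlim : Tendsto (fun t : ℝ => t * b) (𝓝[>] 0) (𝓝 0) :=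
    ((continuous_mul_const b).tendsto' 0 0 (zero_mul b)).mono_left nhdsWithin_le_nhds
  exact ge_of_tendsto hlim (eventually_nhdsWithin_of_forall h)

section Projection

variable {E : Type*} [NormedAddCommGroup E] [InnerProductSpace ℝ E] {K : Set E} {p : E → E}

def IsNearestPointMap (K : Set E) (p : E → E) : Prop :=
  ∀ z, p z ∈ K ∧ ∀ x ∈ K, ‖p z - z‖ ≤ ‖x - z‖

theorem IsNearestPointMap.inner_sub_sub_nonpos (hp : IsNearestPointMap K p) (hK : Convex ℝ K)
    (z : E) {x : E} (hx : x ∈ K) : ⟪z - p z, x - p z⟫ ≤ 0 := by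
  have : Nonempty K := ⟨⟨p z, (hp z).1⟩⟩
  refine (norm_eq_iInf_iff_real_inner_le_zero hK (hp z).1).1 ?_ x hx
  have hbdd : BddBelow (Set.range fun w : K => ‖z - w‖) := ⟨0, by
    rintro _ ⟨w, rfl⟩
    exact norm_nonneg _⟩
  refine le_antisymm (le_ciInf fun w => ?_) (ciInf_le hbdd ⟨p z, (hp z).1⟩)
  rw [norm_sub_rev, norm_sub_rev z]
  exact (hp z).2 w w.2

theorem IsNearestPointMap.inner_sub_self_eq_zero (hp : IsNearestPointMap K p) (hK : Convex ℝ K)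
    (hcone : ∀ x ∈ K, ∀ t : ℝ, 0 ≤ t → t • x ∈ K) (z : E) : ⟪z - p z, p z⟫ = 0 := by
  have h₀ := hp.inner_sub_sub_nonpos hK z (by simpa using hcone _ (hp z).1 0 le_rfl)
  have h₂ := hp.inner_sub_sub_nonpos hK z (hcone _ (hp z).1 2 zero_le_two)
  rw [zero_sub, inner_neg_right] at h₀
  rw [two_smul, add_sub_cancel_right] at h₂
  linarith

theorem IsNearestPointMap.inner_sub_nonpos (hp : IsNearestPointMap K p) (hK : Convex ℝ K)
    (hcone : ∀ x ∈ K, ∀ t : ℝ, 0 ≤ t → t • x ∈ K) (z : E) {x : E} (hx : x ∈ K) :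
    ⟪z - p z, x⟫ ≤ 0 := by
  have h := hp.inner_sub_sub_nonpos hK z hx
  rw [inner_sub_right, hp.inner_sub_self_eq_zero hK hcone] at h
  linarith

theorem IsNearestPointMap.norm_add_sq_le (hp : IsNearestPointMap K p) (hK : Convex ℝ K)
    (hcone : ∀ x ∈ K, ∀ t : ℝ, 0 ≤ t → t • x ∈ K) (z v : E) :
    ‖p (z + v)‖ ^ 2 ≤ ‖p z + v‖ ^ 2 := by
  set q := p (z + v)
  have hresidual : p z + v - q = (z + v - q) - (z - p z) := by abel
  have hinner : 0 ≤ ⟪p z + v - q, q⟫ := by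
    rw [hresidual, inner_sub_left, hp.inner_sub_self_eq_zero hK hcone]
    linarith [hp.inner_sub_nonpos hK hcone z (hp (z + v)).1]
  calc ‖q‖ ^ 2 ≤ ‖p z + v - q‖ ^ 2 + 2 * ⟪p z + v - q, q⟫ + ‖q‖ ^ 2 := by
        nlinarith [sq_nonneg ‖p z + v - q‖]
    _ = ‖p z + v‖ ^ 2 := by rw [← norm_add_sq_real, sub_add_cancel]

end Projection

section Dual

variable {E F : Type*} [NormedAddCommGroup E] [InnerProductSpace ℝ E] [FiniteDimensional ℝ E]
  [NormedAddCommGroup F] [InnerProductSpace ℝ F] [FiniteDimensional ℝ F]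
  {K : Set E} {p : E → E} {A : E →ₗ[ℝ] F} {b : F} {c : E}

open LinearMap

noncomputable def dualObjective (p : E → E) (A : E →ₗ[ℝ] F) (b : F) (c : E) (y : F) : ℝ :=
  (1 / 2) * ‖p (c + adjoint A y)‖ ^ 2 - ⟪b, y⟫

theorem dualObjective_add_le (hp : IsNearestPointMap K p) (hK : Convex ℝ K)
    (hcone : ∀ x ∈ K, ∀ t : ℝ, 0 ≤ t → t • x ∈ K) (y v : F) :
    dualObjective p A b c (y + v) ≤
      dualObjective p A b c y + ⟪A (p (c + adjoint A y)) - b, v⟫ + (1 / 2) * ‖adjoint A v‖ ^ 2 := by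
  have hsmooth := hp.norm_add_sq_le hK hcone (c + adjoint A y) (adjoint A v)
  rw [norm_add_sq_real, adjoint_inner_right] at hsmooth
  simp only [dualObjective, map_add, ← add_assoc, inner_add_right, inner_sub_left]
  linarith

theorem map_eq_of_forall_dualObjective_le (hp : IsNearestPointMap K p) (hK : Convex ℝ K)
    (hcone : ∀ x ∈ K, ∀ t : ℝ, 0 ≤ t → t • x ∈ K) {ystar : F}
    (hmin : ∀ y, dualObjective p A b c ystar ≤ dualObjective p A b c y) :
    A (p (c + adjoint A ystar)) = b := by
  set d := b - A (p (c + adjoint A ystar))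
  have hstep : ∀ t > 0, ‖d‖ ^ 2 ≤ t * ((1 / 2) * ‖adjoint A d‖ ^ 2) := by
    intro t ht
    have h := (hmin (ystar + t • d)).trans (dualObjective_add_le hp hK hcone ystar (t • d))
    have hd : A (p (c + adjoint A ystar)) - b = -d := by simp [d]
    rw [hd, inner_neg_left, real_inner_smul_right, real_inner_self_eq_norm_sq, map_smul,
      norm_smul, mul_pow, Real.norm_eq_abs, sq_abs] at h
    nlinarith
  have hd : d = 0 := by
    simpa using le_antisymm (nonpos_of_forall_pos_le_mul hstep) (sq_nonneg ‖d‖)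
  exact (sub_eq_zero.mp hd).symm

theorem sq_norm_sub_le_of_map_eq (hp : IsNearestPointMap K p) (hK : Convex ℝ K)
    (hcone : ∀ x ∈ K, ∀ t : ℝ, 0 ≤ t → t • x ∈ K) {y : F} {x : E} (hx : x ∈ K)
    (hAx : A x = A (p (c + adjoint A y))) :
    ‖p (c + adjoint A y) - c‖ ^ 2 ≤ ‖x - c‖ ^ 2 := by
  set z := c + adjoint A y
  have hdecomp : p z - c = adjoint A y - (z - p z) := by simp only [z]; abel
  have hinner : 0 ≤ ⟪x - p z, p z - c⟫ := by
    rw [hdecomp, inner_sub_right, adjoint_inner_right, map_sub, hAx, sub_self, inner_zero_left,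
      real_inner_comm, inner_sub_right, hp.inner_sub_self_eq_zero hK hcone]
    linarith [hp.inner_sub_nonpos hK hcone z hx]
  calc ‖p z - c‖ ^ 2 ≤ ‖x - p z‖ ^ 2 + 2 * ⟪x - p z, p z - c⟫ + ‖p z - c‖ ^ 2 := by
        nlinarith [sq_nonneg ‖x - p z‖]
    _ = ‖x - c‖ ^ 2 := by rw [← norm_add_sq_real, sub_add_sub_cancel]

end Dual

theorem dual_minimizer_gives_primal_solution_general (n m : ℕ)
    (K : Set (EuclideanSpace ℝ (Fin n)))
    (hKcvx : Convex ℝ K)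
    (hKcone : ∀ x ∈ K, ∀ t : ℝ, 0 ≤ t → t • x ∈ K)
    (pK : EuclideanSpace ℝ (Fin n) → EuclideanSpace ℝ (Fin n))
    (hpK : ∀ z, pK z ∈ K ∧ ∀ x ∈ K, ‖pK z - z‖ ≤ ‖x - z‖)
    (A : EuclideanSpace ℝ (Fin n) →ₗ[ℝ] EuclideanSpace ℝ (Fin m))
    (b : EuclideanSpace ℝ (Fin m)) (c : EuclideanSpace ℝ (Fin n))
    (ystar : EuclideanSpace ℝ (Fin m))
    (hystar : ∀ y, (1/2) * ‖pK (c + LinearMap.adjoint A ystar)‖^2 - ⟪b, ystar⟫ ≤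
        (1/2) * ‖pK (c + LinearMap.adjoint A y)‖^2 - ⟪b, y⟫) :
    pK (c + LinearMap.adjoint A ystar) ∈ K ∧
      A (pK (c + LinearMap.adjoint A ystar)) = b ∧
      ∀ x ∈ K, A x = b →
        (1/2) * ‖pK (c + LinearMap.adjoint A ystar) - c‖^2 ≤ (1/2) * ‖x - c‖^2 := by
  have hfeas := map_eq_of_forall_dualObjective_le hpK hKcvx hKcone hystar
  refine ⟨(hpK _).1, hfeas, fun x hx hAx => ?_⟩
  have := sq_norm_sub_le_of_map_eq hpK hKcvx hKcone hx (hAx.trans hfeas.symm)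
  linarith

theorem dual_minimizer_gives_primal_solution (n m : ℕ)
    (K : Set (EuclideanSpace ℝ (Fin n)))
    (hKne : K.Nonempty) (hKcl : IsClosed K) (hKcvx : Convex ℝ K)
    (hKcone : ∀ x ∈ K, ∀ t : ℝ, 0 ≤ t → t • x ∈ K)
    (pK : EuclideanSpace ℝ (Fin n) → EuclideanSpace ℝ (Fin n))
    (hpK : ∀ z, pK z ∈ K ∧ ∀ x ∈ K, ‖pK z - z‖ ≤ ‖x - z‖)
    (A : EuclideanSpace ℝ (Fin n) →ₗ[ℝ] EuclideanSpace ℝ (Fin m))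
    (b : EuclideanSpace ℝ (Fin m)) (c : EuclideanSpace ℝ (Fin n))
    (ystar : EuclideanSpace ℝ (Fin m))
    (hystar : ∀ y, (1/2) * ‖pK (c + LinearMap.adjoint A ystar)‖^2 - ⟪b, ystar⟫ ≤
        (1/2) * ‖pK (c + LinearMap.adjoint A y)‖^2 - ⟪b, y⟫) :
    pK (c + LinearMap.adjoint A ystar) ∈ K ∧
      A (pK (c + LinearMap.adjoint A ystar)) = b ∧
      ∀ x ∈ K, A x = b →
        (1/2) * ‖pK (c + LinearMap.adjoint A ystar) - c‖^2 ≤ (1/2) * ‖x - c‖^2 :=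
  dual_minimizer_gives_primal_solution_general n m K hKcvx hKcone pK hpK A b c ystar hystar
end
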